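/- arXiv:2303.01077 — 3 statements merged into one kernel-verified Lean document; each statement's English description precedes it below -/
import Mathlib

section
/- Let d ≥ 1 be an integer, let σ ≥ d+1 be a real number, let 0 < ε < 2^{−12d−9}, and let v : ℤ^d → [0,1] be arbitrary. Let (R^{βγ}) be a family of complex coefficients, indexed by pairs of multi-indices (β,γ) with |β+γ| = 6 and Δ(β+γ) ≤ 1, satisfying |R^{βγ}| ≤ 1 and R^{βγ} = conj(R^{γβ}). Let q : ℝ → (ℤ^d → ℂ) be such that each coordinate t ↦ q_j(t) is differentiable, the curve t ↦ q(t) is continuous for the norm ⫴q⫴_σ = sup_{j∈ℤ^d} |q_j|(1+⟨j⟩)^σ, and q satisfies the equations of motion √−1 · q_j′(t) = v_j q_j(t) + |q_j(t)|² q_j(t) + ∑_{β,γ} R^{βγ} γ_j q(t)^β conj(q(t))^{γ−e_j} for all t ∈ ℝ and all j ∈ ℤ^d (the sum is over the index set above; it is finite for each j). If sup_{j∈ℤ^d} |q_j(0)|(1+|j|₁)^σ ≤ ε and q_0(0) = 0 (the coordinate at the origin vanishes at time 0), then for every real t with |t| ≤ ε^{−3}·2^σ and every j ∈ ℤ^d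 one has | |q_j(t)|² − |q_j(0)|² | < ε²(1+⟨j⟩)^{−3σ}. -/
open scoped BigOperators

noncomputable section

/-- ℓ¹ norm (as a natural number) of a lattice point in `ℤ^d`. -/
def norm1 {d : ℕ} (j : Fin d → ℤ) : ℕ := ∑ i, (j i).natAbs

/-- `⟨j⟩ = max(|j|₁, 1)`. -/
def jbra {d : ℕ} (j : Fin d → ℤ) : ℕ := max (norm1 j) 1

/-- ℓ¹-diameter of a finite set of lattice points. -/
def diam1 {d : ℕ} (S : Finset (Fin d → ℤ)) : ℕ :=
  (S ×ˢ S).sup fun p => norm1 (p.1 - p.2)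

/-- Multi-indices on `ℤ^d`: finitely supported functions to `ℕ`. -/
abbrev MIdx (d : ℕ) := (Fin d → ℤ) →₀ ℕ

/-- total weight `|m| = ∑ m_j` of a multi-index. -/
def wt {d : ℕ} (m : MIdx d) : ℕ := m.sum fun _ n => n

/-- `Δ(m)`: ℓ¹-diameter of the support of a multi-index. -/
def mdiam {d : ℕ} (m : MIdx d) : ℕ := diam1 m.support

/-- the monomial `q^β * conj(q)^γ`. -/
def mono {d : ℕ} (q : (Fin d → ℤ) → ℂ) (β γ : MIdx d) : ℂ :=
  (β.prod fun a n => q a ^ n) * (γ.prod fun a n => (starRingEnd ℂ) (q a) ^ n)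

/-- Index set of short-range degree-6 monomials. -/
abbrev PairIdx (d : ℕ) :=
  {p : MIdx d × MIdx d // wt (p.1 + p.2) = 6 ∧ mdiam (p.1 + p.2) ≤ 1}


/-!
A bootstrap in the weighted norm `‖q_j‖ (1 + ⟨j⟩)^σ`. While it stays below `2ε`, the terms
`v_j q_j` and `|q_j|² q_j` of the vector field do not move `|q_j|²`, so
`d|q_j|²/dt = 2 Im (conj q_j · ∂R/∂q̄_j)`. Each monomial of `∂R/∂q̄_j` times `q_j` is a
degree-6 product supported on `j` and one neighbour `k`; as `1 + ⟨k⟩ ≥ ⟨j⟩`, it is bounded by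
`(2ε)^6 2^{-σ} (1 + ⟨j⟩)^{-3σ}`, and at most `343 · 3^d` monomials contribute. Over
`|t| ≤ ε^{-3} 2^σ` the drift of `|q_j|²` is thus at most `C_d ε · ε² (1 + ⟨j⟩)^{-3σ}` with
`C_d ε < 1`. This gives the theorem and improves the a priori bound to `3ε/2`, which closes the
bootstrap by continuity.
-/

open Filter Topology

section Lattice

variable {d : ℕ}

lemma norm1_eq_zero_iff {j : Fin d → ℤ} : norm1 j = 0 ↔ j = 0 := by
  simp [norm1, Finset.sum_eq_zero_iff, funext_iff]

lemma norm1_sub_comm (j k : Fin d → ℤ) : norm1 (j - k) = norm1 (k - j) := by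
  simp only [norm1, Pi.sub_apply, ← Int.natAbs_neg (j _ - k _), neg_sub]

lemma norm1_add_le (j k : Fin d → ℤ) : norm1 (j + k) ≤ norm1 j + norm1 k := by
  rw [norm1, norm1, norm1, ← Finset.sum_add_distrib]
  exact Finset.sum_le_sum fun i _ => Int.natAbs_add_le _ _

lemma jbra_le_one_add_jbra {j k : Fin d → ℤ} (h : norm1 (k - j) ≤ 1) :
    jbra j ≤ 1 + jbra k := by
  have := norm1_add_le k (j - k)
  rw [add_sub_cancel, norm1_sub_comm] at this
  unfold jbra
  omega

lemma jbra_eq_norm1 {j : Fin d → ℤ} (h : j ≠ 0) : jbra j = norm1 j :=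
  max_eq_left (Nat.one_le_iff_ne_zero.mpr (norm1_eq_zero_iff.not.mpr h))

lemma two_le_one_add_jbra (j : Fin d → ℤ) : (2 : ℝ) ≤ 1 + jbra j := by
  have : (1 : ℝ) ≤ jbra j := by exact_mod_cast le_max_right (norm1 j) 1
  linarith

lemma norm1_cast_zmod_two (j : Fin d → ℤ) : (norm1 j : ZMod 2) = ∑ i, (j i : ZMod 2) := by
  simp [norm1]

/-- By parity: `|x|₁ ≡ ∑ i, x i (mod 2)`. -/
lemma eq_of_norm1_sub_le_one {a j k : Fin d → ℤ} (ha : norm1 (a - j) = 1)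
    (hk : norm1 (k - j) = 1) (hak : norm1 (a - k) ≤ 1) : a = k := by
  have hpar : (norm1 (a - k) : ZMod 2) = 0 :=
    calc (norm1 (a - k) : ZMod 2)
        = ∑ i, (((a - j) i : ℤ) : ZMod 2) - ∑ i, (((k - j) i : ℤ) : ZMod 2) := by
          rw [norm1_cast_zmod_two, ← Finset.sum_sub_distrib]
          simp
      _ = 0 := by rw [← norm1_cast_zmod_two, ← norm1_cast_zmod_two, ha, hk, sub_self]
  have : 2 ∣ norm1 (a - k) := (ZMod.natCast_eq_zero_iff _ _).mp hpar
  have h0 : norm1 (a - k) = 0 := by omega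
  exact sub_eq_zero.mp (norm1_eq_zero_iff.mp h0)

lemma mem_piFinset_Icc_of_norm1_sub_le_one {j k : Fin d → ℤ} (h : norm1 (k - j) ≤ 1) :
    k ∈ Fintype.piFinset fun i => Finset.Icc (j i - 1) (j i + 1) := by
  rw [Fintype.mem_piFinset]
  intro i
  have : (k i - j i).natAbs ≤ 1 :=
    le_trans (Finset.single_le_sum (f := fun l => ((k - j) l).natAbs)
      (fun l _ => Nat.zero_le _) (Finset.mem_univ i)) h
  rw [Finset.mem_Icc]
  omega

end Lattice

section MultiIndex

variable {d : ℕ}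

lemma le_wt (m : MIdx d) (a : Fin d → ℤ) : m a ≤ wt m := by
  by_cases h : a ∈ m.support
  · exact Finset.single_le_sum (fun i _ => Nat.zero_le _) h
  · simp [Finsupp.notMem_support_iff.mp h]

lemma wt_eq_add_of_support_subset {m : MIdx d} {j k : Fin d → ℤ} (hjk : j ≠ k)
    (hm : m.support ⊆ {j, k}) : m j + m k = wt m := by
  rw [wt, Finsupp.sum_of_support_subset m hm _ fun _ _ => rfl, Finset.sum_pair hjk]

lemma finsupp_eq_of_support_subset_pair {m m' : MIdx d} {j k : Fin d → ℤ}
    (hm : m.support ⊆ {j, k}) (hm' : m'.support ⊆ {j, k}) (hj : m j = m' j)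
    (hk : m k = m' k) : m = m' := by
  ext a
  by_cases haj : a = j
  · rwa [haj]
  by_cases hak : a = k
  · rwa [hak]
  have ha : a ∉ ({j, k} : Finset (Fin d → ℤ)) := by simp [haj, hak]
  rw [Finsupp.notMem_support_iff.mp fun h => ha (hm h),
    Finsupp.notMem_support_iff.mp fun h => ha (hm' h)]

lemma norm1_sub_le_mdiam {m : MIdx d} {a b : Fin d → ℤ} (ha : a ∈ m.support)
    (hb : b ∈ m.support) : norm1 (a - b) ≤ mdiam m := by
  unfold mdiam diam1
  exact Finset.le_sup (f := fun p => norm1 (p.1 - p.2))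
    (Finset.mem_product.mpr ⟨ha, hb⟩ : (a, b) ∈ m.support ×ˢ m.support)

lemma norm1_sub_eq_one_of_mdiam_le_one {m : MIdx d} (hm : mdiam m ≤ 1) {a b : Fin d → ℤ}
    (ha : a ∈ m.support) (hb : b ∈ m.support) (hab : a ≠ b) : norm1 (a - b) = 1 := by
  have h0 : norm1 (a - b) ≠ 0 := norm1_eq_zero_iff.not.mpr (sub_ne_zero.mpr hab)
  have := (norm1_sub_le_mdiam ha hb).trans hm
  omega

lemma exists_support_subset_pair (hd : 1 ≤ d) {m : MIdx d} (hm : mdiam m ≤ 1)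
    {j : Fin d → ℤ} (hj : j ∈ m.support) :
    ∃ k, k ≠ j ∧ norm1 (k - j) ≤ 1 ∧ m.support ⊆ {j, k} := by
  by_cases hsub : m.support ⊆ {j}
  · refine ⟨j + Pi.single ⟨0, hd⟩ 1, by simp, ?_, hsub.trans (by simp)⟩
    rw [add_sub_cancel_left]
    simp [norm1, Pi.single_apply, apply_ite]
  obtain ⟨k, hk, hkj⟩ := Finset.not_subset.mp hsub
  rw [Finset.mem_singleton] at hkj
  have hk1 := norm1_sub_eq_one_of_mdiam_le_one hm hk hj hkj
  refine ⟨k, hkj, hk1.le, fun a ha => ?_⟩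
  rw [Finset.mem_insert, Finset.mem_singleton]
  by_cases haj : a = j
  · exact Or.inl haj
  exact Or.inr (eq_of_norm1_sub_le_one (norm1_sub_eq_one_of_mdiam_le_one hm ha hj haj) hk1
    (norm1_sub_le_mdiam ha hk |>.trans hm))

/-- A pair with `γ_j ≠ 0` is determined by the neighbour `k` of `j` carrying the rest of its
support (one of `3 ^ d` points of a box) and by `β_j, β_k, γ_j ≤ 6`, since `γ_k` is then fixed by
the total weight. -/
lemma exists_finset_pairIdx_card_le (hd : 1 ≤ d) (j : Fin d → ℤ) :
    ∃ s : Finset (PairIdx d), (∀ p : PairIdx d, p.1.2 j ≠ 0 → p ∈ s) ∧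
      s.card ≤ 343 * 3 ^ d := by
  have hsupp : ∀ p : PairIdx d, p.1.2 j ≠ 0 → ∃ k, k ≠ j ∧ norm1 (k - j) ≤ 1 ∧
      (p.1.1 + p.1.2).support ⊆ {j, k} := fun p hp =>
    exists_support_subset_pair hd p.2.2
      (Finsupp.support_mono le_add_self (Finsupp.mem_support_iff.mpr hp))
  choose! k hkj hk1 hk using hsupp
  set S : Set (PairIdx d) := {p | p.1.2 j ≠ 0}
  let f : PairIdx d → (Fin d → ℤ) × ℕ × ℕ × ℕ := fun p => (k p, p.1.1 j, p.1.1 (k p), p.1.2 j)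
  let T := (Fintype.piFinset fun i => Finset.Icc (j i - 1) (j i + 1)) ×ˢ
    Finset.range 7 ×ˢ Finset.range 7 ×ˢ Finset.range 7
  have hmaps : Set.MapsTo f S T := by
    intro p hp
    have hle : ∀ a, p.1.1 a + p.1.2 a ≤ 6 := fun a => by
      simpa [p.2.1] using le_wt (p.1.1 + p.1.2) a
    simp only [T, f, Finset.coe_product, Set.mem_prod, Finset.mem_coe, Finset.mem_range]
    exact ⟨mem_piFinset_Icc_of_norm1_sub_le_one (hk1 p hp), by grind, by grind, by grind⟩
  have hinj : Set.InjOn f S := by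
    intro p hp p' hp' hf
    simp only [f, Prod.mk.injEq] at hf
    obtain ⟨hkk, hβj, hβk, hγj⟩ := hf
    have hs := hk p hp
    have hs' := hk p' hp'
    rw [← hkk] at hs' hβk
    have hγk : p.1.2 (k p) = p'.1.2 (k p) := by
      have h := wt_eq_add_of_support_subset (hkj p hp).symm hs
      have h' := wt_eq_add_of_support_subset (hkj p hp).symm hs'
      rw [p.2.1] at h
      rw [p'.2.1] at h'
      simp only [Finsupp.add_apply] at h h'
      omega
    refine Subtype.ext (Prod.ext ?_ ?_)
    · exact finsupp_eq_of_support_subset_pair ((Finsupp.support_mono le_self_add).trans hs)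
        ((Finsupp.support_mono le_self_add).trans hs') hβj hβk
    · exact finsupp_eq_of_support_subset_pair ((Finsupp.support_mono le_add_self).trans hs)
        ((Finsupp.support_mono le_add_self).trans hs') hγj hγk
  have hfin : S.Finite :=
    Set.Finite.of_finite_image ((T.finite_toSet).subset hmaps.image_subset) hinj
  refine ⟨hfin.toFinset, fun p hp => hfin.mem_toFinset.mpr hp, ?_⟩
  calc hfin.toFinset.card ≤ T.card :=
        Finset.card_le_card_of_injOn f (by simpa using hmaps) (by simpa using hinj)
    _ = 343 * 3 ^ d := by
        simp only [T, Finset.card_product, Fintype.card_piFinset, Int.card_Icc,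
          Finset.card_range]
        ring_nf
        simp

end MultiIndex

section Monomial

variable {d : ℕ}

lemma norm_mono (u : (Fin d → ℤ) → ℂ) (β γ : MIdx d) :
    ‖mono u β γ‖ = (β + γ).prod fun a n => ‖u a‖ ^ n := by
  rw [mono, norm_mul, Finsupp.prod_add_index' (fun _ => pow_zero _) fun _ _ _ => pow_add _ _ _]
  simp [Finsupp.prod, norm_prod]

lemma norm_mul_norm_mono_sub_single (u : (Fin d → ℤ) → ℂ) (β : MIdx d) {γ : MIdx d}
    {j : Fin d → ℤ} (hγ : γ j ≠ 0) :
    ‖u j‖ * ‖mono u β (γ - Finsupp.single j 1)‖ = (β + γ).prod fun a n => ‖u a‖ ^ n := by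
  have hle : Finsupp.single j 1 ≤ γ := Finsupp.single_le_iff.mpr (Nat.one_le_iff_ne_zero.mpr hγ)
  conv_rhs => rw [← tsub_add_cancel_of_le hle, ← add_assoc]
  rw [Finsupp.prod_add_index' (fun _ => pow_zero _) fun _ _ _ => pow_add _ _ _, norm_mono,
    mul_comm]
  simp

lemma two_mul_pow_three_le_pow_mul_pow {x y : ℝ} (hx : 2 ≤ x) (hy : 2 ≤ y) (hxy : x ≤ 1 + y)
    {a b : ℕ} (ha : 1 ≤ a) (hab : a + b = 6) : 2 * x ^ 3 ≤ x ^ a * y ^ b := by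
  have hx0 : 0 < x := by linarith
  rcases Nat.eq_zero_or_pos b with rfl | hb
  · obtain rfl : a = 6 := by omega
    nlinarith [pow_le_pow_left₀ (by norm_num) hx 3, pow_pos hx0 3]
  obtain ⟨b, rfl⟩ := Nat.exists_eq_add_of_le' hb
  -- squaring lets `x ≤ y ^ 2` trade each factor `y` for `√x`
  have key : x ^ 3 ≤ x ^ a * y ^ b := by
    apply le_of_pow_le_pow_left₀ two_ne_zero (by positivity)
    calc (x ^ 3) ^ 2 = x ^ 6 := by ring
      _ ≤ x ^ (2 * a + b) := pow_le_pow_right₀ (by linarith) (by omega)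
      _ = (x ^ a) ^ 2 * x ^ b := by ring
      _ ≤ (x ^ a) ^ 2 * (y ^ 2) ^ b := by gcongr; nlinarith
      _ = (x ^ a * y ^ b) ^ 2 := by ring
  calc 2 * x ^ 3 ≤ y * (x ^ a * y ^ b) := by gcongr
    _ = x ^ a * y ^ (b + 1) := by ring

lemma prod_one_add_jbra_rpow_neg_le {σ : ℝ} (hσ : 0 ≤ σ) {m : MIdx d} {j k : Fin d → ℤ}
    (hjk : j ≠ k) (hk : norm1 (k - j) ≤ 1) (hm : m.support ⊆ {j, k}) (hj : 1 ≤ m j)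
    (hwt : wt m = 6) :
    (m.prod fun a n => ((1 + (jbra a : ℝ)) ^ (-σ)) ^ n)
      ≤ 2 ^ (-σ) * (1 + (jbra j : ℝ)) ^ (-(3 * σ)) := by
  set x : ℝ := 1 + jbra j
  set y : ℝ := 1 + jbra k
  have hx := two_le_one_add_jbra j
  have hy := two_le_one_add_jbra k
  have hxy : x ≤ 1 + y := by
    have := jbra_le_one_add_jbra hk
    simp only [x, y]
    exact_mod_cast Nat.add_le_add_left this 1
  rw [Finsupp.prod_of_support_subset m hm _ fun _ _ => pow_zero _, Finset.prod_pair hjk,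
    Real.rpow_pow_comm (by linarith), Real.rpow_pow_comm (by linarith),
    ← Real.mul_rpow (by positivity) (by positivity), neg_mul_eq_mul_neg,
    show (3 : ℝ) = (3 : ℕ) by norm_num, Real.rpow_natCast_mul (by linarith),
    ← Real.mul_rpow (by norm_num) (by positivity)]
  have hsum : m j + m k = 6 := by rw [wt_eq_add_of_support_subset hjk hm, hwt]
  exact Real.rpow_le_rpow_of_nonpos (by positivity)
    (two_mul_pow_three_le_pow_mul_pow hx hy hxy hj hsum) (by linarith)

end Monomial

section Forcing

variable {d : ℕ}

lemma norm_mul_norm_mono_le (hd : 1 ≤ d) {σ c : ℝ} (hσ : 0 ≤ σ)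
    {u : (Fin d → ℤ) → ℂ} (hu : ∀ a, ‖u a‖ * (1 + (jbra a : ℝ)) ^ σ ≤ c)
    {j : Fin d → ℤ} (p : PairIdx d) (hp : p.1.2 j ≠ 0) :
    ‖u j‖ * ‖mono u p.1.1 (p.1.2 - Finsupp.single j 1)‖
      ≤ c ^ 6 * (2 ^ (-σ) * (1 + (jbra j : ℝ)) ^ (-(3 * σ))) := by
  obtain ⟨⟨β, γ⟩, hwt, hdiam⟩ := p
  obtain ⟨k, hkj, hk, hsub⟩ := exists_support_subset_pair hd hdiam
    (Finsupp.support_mono le_add_self (Finsupp.mem_support_iff.mpr hp))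
  simp only at hp ⊢
  have hu' : ∀ a, ‖u a‖ ≤ c * (1 + (jbra a : ℝ)) ^ (-σ) := fun a => by
    have := two_le_one_add_jbra a
    rw [Real.rpow_neg (by linarith), ← div_eq_mul_inv, le_div_iff₀ (by positivity)]
    exact hu a
  rw [norm_mul_norm_mono_sub_single u β hp]
  calc ((β + γ).prod fun a n => ‖u a‖ ^ n)
      ≤ (β + γ).prod fun a n => (c * (1 + (jbra a : ℝ)) ^ (-σ)) ^ n :=
        Finset.prod_le_prod (fun _ _ => by positivity)
          fun a _ => pow_le_pow_left₀ (norm_nonneg _) (hu' a) _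
    _ = c ^ 6 * (β + γ).prod fun a n => ((1 + (jbra a : ℝ)) ^ (-σ)) ^ n := by
        simp only [mul_pow]
        rw [Finsupp.prod_mul, Finsupp.prod, Finset.prod_pow_eq_pow_sum, ← hwt]
        rfl
    _ ≤ _ := by
        gcongr
        refine prod_one_add_jbra_rpow_neg_le hσ hkj.symm hk hsub ?_ hwt
        simp only [Finsupp.add_apply]
        omega

/-- `∂R/∂q̄_j` evaluated at `u`. -/
def dR (R : MIdx d → MIdx d → ℂ) (u : (Fin d → ℤ) → ℂ) (j : Fin d → ℤ) : ℂ :=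
  ∑' p : PairIdx d, R p.1.1 p.1.2 * (p.1.2 j : ℂ) * mono u p.1.1 (p.1.2 - Finsupp.single j 1)

lemma norm_mul_norm_dR_le (hd : 1 ≤ d) {σ c : ℝ} (hσ : 0 ≤ σ)
    {R : MIdx d → MIdx d → ℂ}
    (hR : ∀ β γ : MIdx d, wt (β + γ) = 6 → mdiam (β + γ) ≤ 1 → ‖R β γ‖ ≤ 1)
    {u : (Fin d → ℤ) → ℂ} (hu : ∀ a, ‖u a‖ * (1 + (jbra a : ℝ)) ^ σ ≤ c)
    (j : Fin d → ℤ) :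
    ‖u j‖ * ‖dR R u j‖
      ≤ 6 * (343 * 3 ^ d) * c ^ 6 * (2 ^ (-σ) * (1 + (jbra j : ℝ)) ^ (-(3 * σ))) := by
  set B := c ^ 6 * (2 ^ (-σ) * (1 + (jbra j : ℝ)) ^ (-(3 * σ)))
  have hB : 0 ≤ B := by positivity
  set g : PairIdx d → ℂ := fun p =>
    R p.1.1 p.1.2 * (p.1.2 j : ℂ) * mono u p.1.1 (p.1.2 - Finsupp.single j 1)
  have hterm : ∀ p, ‖u j‖ * ‖g p‖ ≤ 6 * B := by
    intro p
    by_cases hp : p.1.2 j = 0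
    · simp [g, hp, hB]
    have hγ : (p.1.2 j : ℝ) ≤ 6 := by
      have := p.2.1 ▸ le_wt (p.1.1 + p.1.2) j
      simp only [Finsupp.add_apply] at this
      exact_mod_cast (Nat.le_add_left _ _).trans this
    calc ‖u j‖ * ‖g p‖
        = ‖R p.1.1 p.1.2‖ * p.1.2 j * (‖u j‖ * ‖mono u p.1.1 (p.1.2 - Finsupp.single j 1)‖) := by
          simp only [g, norm_mul, Complex.norm_natCast]
          ring
      _ ≤ 1 * 6 * B := by
          gcongr
          · exact hR _ _ p.2.1 p.2.2
          · exact norm_mul_norm_mono_le hd hσ hu p hp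
      _ = 6 * B := by ring
  obtain ⟨s, hs, hcard⟩ := exists_finset_pairIdx_card_le hd j
  rw [dR, tsum_eq_sum (s := s) fun p hp => by simp [not_imp_comm.mp (hs p) hp]]
  calc ‖u j‖ * ‖∑ p ∈ s, g p‖ ≤ ∑ p ∈ s, ‖u j‖ * ‖g p‖ := by
        rw [← Finset.mul_sum]
        gcongr
        exact norm_sum_le _ _
    _ ≤ s.card * (6 * B) := by
        rw [← nsmul_eq_mul]
        exact Finset.sum_le_card_nsmul _ _ _ fun p _ => hterm p
    _ ≤ (343 * 3 ^ d : ℕ) * (6 * B) := by gcongr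
    _ = _ := by simp only [B]; push_cast; ring

end Forcing

lemma forall_abs_le_of_continuous_induction {G : ℝ → Prop} {T : ℝ} (hG : IsClosed {s | G s})
    (h0 : G 0) (hstep : ∀ t, |t| ≤ T → (∀ s, |s| ≤ |t| → G s) → ∀ᶠ s in 𝓝 t, G s) :
    ∀ t, |t| ≤ T → G t := by
  by_contra! hbad
  set B := abs '' {s | |s| ≤ T ∧ ¬ G s}
  have hBne : B.Nonempty := Set.Nonempty.image abs hbad
  have hBbdd : BddBelow B := ⟨0, by rintro _ ⟨s, -, rfl⟩; exact abs_nonneg s⟩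
  -- the first radius at which `G` fails
  set τ := sInf B
  have hτ0 : 0 ≤ τ := le_csInf hBne (by rintro _ ⟨s, -, rfl⟩; exact abs_nonneg s)
  have hτT : τ ≤ T := by
    obtain ⟨_, ⟨s, hs, rfl⟩⟩ := hBne
    exact (csInf_le hBbdd ⟨s, hs, rfl⟩).trans hs.1
  have hlt : ∀ s, |s| < τ → G s := fun s hs => by
    by_contra hGs
    exact hs.not_ge (csInf_le hBbdd ⟨s, ⟨hs.le.trans hτT, hGs⟩, rfl⟩)
  have hle : ∀ s, |s| ≤ τ → G s := by
    intro s hs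
    rcases hτ0.eq_or_lt with hτ | hτ
    · rw [← hτ, abs_nonpos_iff] at hs
      rwa [hs]
    have hIcc : Set.Icc (-τ) τ ⊆ {s | G s} := by
      rw [← closure_Ioo (by linarith)]
      exact hG.closure_subset_iff.mpr fun s hs => hlt s (abs_lt.mpr hs)
    exact hIcc (abs_le.mp hs)
  have hnear : ∀ t, |t| = τ → ∃ δ > 0, ∀ s, dist s t < δ → G s := fun t ht =>
    Metric.eventually_nhds_iff.mp (hstep t (ht ▸ hτT) fun s hs => hle s (ht ▸ hs))
  obtain ⟨δ, hδ, hright⟩ := hnear τ (abs_of_nonneg hτ0)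
  obtain ⟨δ', hδ', hleft⟩ := hnear (-τ) (by rw [abs_neg, abs_of_nonneg hτ0])
  obtain ⟨_, ⟨s, ⟨-, hGs⟩, rfl⟩, hs⟩ :=
    exists_lt_of_csInf_lt hBne (lt_add_of_pos_right τ (lt_min hδ hδ'))
  apply hGs
  rcases le_or_gt |s| τ with hsτ | hsτ
  · exact hle s hsτ
  rcases le_or_gt 0 s with hs0 | hs0
  · rw [abs_of_nonneg hs0] at hs hsτ
    exact hright s (by rw [Real.dist_eq, abs_of_pos (by linarith)]; linarith [min_le_left δ δ'])
  · rw [abs_of_neg hs0] at hs hsτ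
    exact hleft s (by rw [Real.dist_eq, abs_of_neg (by linarith)]; linarith [min_le_right δ δ'])

lemma eventually_forall_norm_mul_le {ι : Type*} {q : ℝ → ι → ℂ} {ρ : ι → ℝ}
    (hρ : ∀ a, 0 ≤ ρ a) {t c c' : ℝ}
    (hcont : ∀ δ > (0 : ℝ), ∃ r > (0 : ℝ), ∀ s, |s - t| < r → ∀ a, ‖q s a - q t a‖ * ρ a ≤ δ)
    (ht : ∀ a, ‖q t a‖ * ρ a ≤ c) (hc : c < c') :
    ∀ᶠ s in 𝓝 t, ∀ a, ‖q s a‖ * ρ a ≤ c' := by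
  obtain ⟨r, hr, hq⟩ := hcont (c' - c) (sub_pos.mpr hc)
  filter_upwards [Metric.ball_mem_nhds t hr] with s hs a
  calc ‖q s a‖ * ρ a ≤ (‖q s a - q t a‖ + ‖q t a‖) * ρ a := by
        gcongr
        · exact hρ a
        · exact norm_le_norm_sub_add _ _
    _ ≤ c' - c + c := by
        rw [add_mul]
        exact add_le_add (hq s (by simpa [Real.dist_eq] using hs) a) (ht a)
    _ = c' := sub_add_cancel _ _

/-- `2 * inner ℝ z w` is the derivative of `‖z‖ ^ 2` along `w`; a term `c * z` with `c` real
contributes nothing to it. -/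
lemma abs_inner_le_of_I_mul_eq {z w F : ℂ} {c : ℝ} (h : Complex.I * w = c * z + F) :
    |inner ℝ z w| ≤ ‖z‖ * ‖F‖ := by
  have hw : w = -Complex.I * (c * z + F) := by
    rw [← h, ← mul_assoc, neg_mul, Complex.I_mul_I, neg_neg, one_mul]
  have him : inner ℝ z w = (F * (starRingEnd ℂ) z).im := by
    simp only [Complex.inner, hw, Complex.mul_re, Complex.mul_im, Complex.add_re, Complex.add_im,
      Complex.neg_re, Complex.neg_im, Complex.I_re, Complex.I_im, Complex.conj_re,
      Complex.conj_im, Complex.ofReal_re, Complex.ofReal_im]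
    ring
  rw [him, mul_comm, ← Complex.norm_conj z, ← norm_mul]
  exact Complex.abs_im_le_norm _

section Dynamics

variable {d : ℕ} {σ ε : ℝ} {v : (Fin d → ℤ) → ℝ} {R : MIdx d → MIdx d → ℂ}
  {q q' : ℝ → (Fin d → ℤ) → ℂ}

lemma abs_norm_sq_sub_le (hd : 1 ≤ d) (hσ : 0 ≤ σ)
    (hR : ∀ β γ : MIdx d, wt (β + γ) = 6 → mdiam (β + γ) ≤ 1 → ‖R β γ‖ ≤ 1)
    (hderiv : ∀ t j, HasDerivAt (fun s => q s j) (q' t j) t)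
    (hode : ∀ t j, Complex.I * q' t j =
      v j * q t j + ((‖q t j‖ ^ 2 : ℝ) : ℂ) * q t j + dR R (q t) j)
    {t : ℝ} (ht : |t| ≤ ε ^ (-3 : ℤ) * 2 ^ σ)
    (hq : ∀ s, |s| ≤ |t| → ∀ a, ‖q s a‖ * (1 + (jbra a : ℝ)) ^ σ ≤ 2 * ε) (j : Fin d → ℤ) :
    |‖q t j‖ ^ 2 - ‖q 0 j‖ ^ 2|
      ≤ 263424 * 3 ^ d * ε * (ε ^ 2 * (1 + (jbra j : ℝ)) ^ (-(3 * σ))) := by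
  set X := (1 + (jbra j : ℝ)) ^ (-(3 * σ))
  set M := 263424 * 3 ^ d * ε ^ 6 * (2 ^ (-σ) * X)
  have hM : ∀ s ∈ Set.uIcc 0 t, ‖2 * inner ℝ (q s j) (q' s j)‖ ≤ M := by
    intro s hs
    have hst : |s| ≤ |t| := by simpa using Set.abs_sub_left_of_mem_uIcc hs
    rw [Real.norm_eq_abs, abs_mul, abs_two]
    calc 2 * |inner ℝ (q s j) (q' s j)| ≤ 2 * (‖q s j‖ * ‖dR R (q s) j‖) := by
          gcongr
          exact abs_inner_le_of_I_mul_eq (c := v j + ‖q s j‖ ^ 2) (by rw [hode]; push_cast; ring)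
      _ ≤ 2 * (6 * (343 * 3 ^ d) * (2 * ε) ^ 6 * (2 ^ (-σ) * X)) := by
          gcongr 2 * ?_
          exact norm_mul_norm_dR_le hd hσ hR (hq s hst) j
      _ = M := by ring
  have hmvt := Convex.norm_image_sub_le_of_norm_hasDerivWithin_le
    (fun s _ => (hderiv s j).norm_sq.hasDerivWithinAt) hM (convex_uIcc 0 t)
    Set.left_mem_uIcc Set.right_mem_uIcc
  rw [Real.norm_eq_abs, Real.norm_eq_abs, sub_zero] at hmvt
  have h2 : (2 : ℝ) ^ (-σ) * 2 ^ σ = 1 := by rw [← Real.rpow_add two_pos]; simp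
  have hε3 : ε ^ 6 * ε ^ (-3 : ℤ) = ε ^ 3 := by
    rcases eq_or_ne ε 0 with rfl | hε
    · simp
    · rw [← zpow_natCast, ← zpow_add₀ hε]
      norm_num
  calc _ ≤ M * |t| := hmvt
    _ ≤ M * (ε ^ (-3 : ℤ) * 2 ^ σ) := by gcongr
    _ = _ := by linear_combination (263424 * 3 ^ d * X) * (ε ^ 6 * ε ^ (-3 : ℤ) * h2 + hε3)

end Dynamics

lemma mul_lt_one_of_lt_two_zpow {d : ℕ} (hd : 1 ≤ d) {ε : ℝ}
    (hε : ε < (2 : ℝ) ^ (-(12 * (d : ℤ)) - 9)) : 263424 * 3 ^ d * ε < 1 := by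
  have hnat : 263424 * 3 ^ d ≤ 2 ^ (12 * d + 9) :=
    calc 263424 * 3 ^ d ≤ 2 ^ 19 * 4 ^ d := by gcongr <;> norm_num
      _ = 2 ^ (2 * d + 19) := by rw [pow_add, pow_mul]; norm_num; ring
      _ ≤ 2 ^ (12 * d + 9) := Nat.pow_le_pow_right (by norm_num) (by omega)
  have h2 : (2 : ℝ) ^ (-(12 * (d : ℤ)) - 9) = ((2 : ℝ) ^ (12 * d + 9))⁻¹ := by
    rw [← zpow_natCast, ← zpow_neg]
    push_cast
    ring_nf
  rw [h2] at hε
  calc 263424 * 3 ^ d * ε < 263424 * 3 ^ d * ((2 : ℝ) ^ (12 * d + 9))⁻¹ := by gcongr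
    _ ≤ 1 := mul_inv_le_one_of_le₀ (by exact_mod_cast hnat) (by positivity)

lemma norm_mul_one_add_jbra_rpow_le {d : ℕ} {u : (Fin d → ℤ) → ℂ} {σ ε : ℝ} (hε : 0 ≤ ε)
    (hu : ∀ j, ‖u j‖ * (1 + (norm1 j : ℝ)) ^ σ ≤ ε) (h0 : u 0 = 0) (j : Fin d → ℤ) :
    ‖u j‖ * (1 + (jbra j : ℝ)) ^ σ ≤ ε := by
  rcases eq_or_ne j 0 with rfl | hj
  · simpa [h0] using hε
  · rw [jbra_eq_norm1 hj]
    exact hu j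

lemma norm_mul_rpow_le_of_abs_sq_sub_le {A B x σ ε κ : ℝ} (hx : 1 ≤ x) (hσ : 0 ≤ σ)
    (hA : 0 ≤ A) (hB0 : 0 ≤ B) (hκ : κ ≤ 1) (hB : B * x ^ σ ≤ ε)
    (h : |A ^ 2 - B ^ 2| ≤ κ * (ε ^ 2 * x ^ (-(3 * σ)))) : A * x ^ σ ≤ 3 / 2 * ε := by
  have hρ : 0 ≤ x ^ σ := by positivity
  have hX : 0 ≤ x ^ (-(3 * σ)) := by positivity
  have hXρ : x ^ (-(3 * σ)) * (x ^ σ) ^ 2 ≤ 1 := by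
    rw [← Real.rpow_natCast, ← Real.rpow_mul (by linarith), ← Real.rpow_add (by linarith)]
    exact Real.rpow_le_one_of_one_le_of_nonpos hx (by push_cast; linarith)
  have hA2 : A ^ 2 ≤ B ^ 2 + κ * (ε ^ 2 * x ^ (-(3 * σ))) := by
    linarith [le_abs_self (A ^ 2 - B ^ 2)]
  have hsq : (A * x ^ σ) ^ 2 ≤ (3 / 2 * ε) ^ 2 := by
    have hκ' : κ * (ε ^ 2 * (x ^ (-(3 * σ)) * (x ^ σ) ^ 2)) ≤ ε ^ 2 := by
      nlinarith [mul_nonneg (sq_nonneg ε) (mul_nonneg hX (sq_nonneg (x ^ σ)))]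
    nlinarith [mul_le_mul_of_nonneg_right hA2 (sq_nonneg (x ^ σ)), mul_self_le_mul_self
      (by positivity : 0 ≤ B * x ^ σ) hB]
  exact (pow_le_pow_iff_left₀ (by positivity) (by linarith [mul_nonneg hB0 hρ])
    two_ne_zero).mp hsq

theorem stability_short_range_oscillators_general
    (d : ℕ) (hd : 1 ≤ d) (σ ε : ℝ) (hσ : (d : ℝ) + 1 ≤ σ)
    (hε0 : 0 < ε) (hε1 : ε < (2 : ℝ) ^ (-(12 * (d : ℤ)) - 9))
    (v : (Fin d → ℤ) → ℝ)
    (R : MIdx d → MIdx d → ℂ)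
    (hRbd : ∀ β γ : MIdx d, wt (β + γ) = 6 → mdiam (β + γ) ≤ 1 →
      ‖R β γ‖ ≤ 1)
    (q q' : ℝ → (Fin d → ℤ) → ℂ)
    (hderiv : ∀ (t : ℝ) (j : Fin d → ℤ), HasDerivAt (fun s => q s j) (q' t j) t)
    (hcont : ∀ t₀ : ℝ, ∀ δ > (0 : ℝ), ∃ r > (0 : ℝ), ∀ t : ℝ, |t - t₀| < r →
      ∀ j, ‖q t j - q t₀ j‖ * (1 + (jbra j : ℝ)) ^ σ ≤ δ)
    (hode : ∀ (t : ℝ) (j : Fin d → ℤ),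
      Complex.I * q' t j =
        (v j : ℂ) * q t j + ((‖q t j‖ ^ 2 : ℝ) : ℂ) * q t j +
          ∑' p : PairIdx d,
            R p.1.1 p.1.2 * (p.1.2 j : ℂ) *
              mono (q t) p.1.1 (p.1.2 - Finsupp.single j 1))
    (hinit : ∀ j, ‖q 0 j‖ * (1 + (norm1 j : ℝ)) ^ σ ≤ ε)
    (hzero : q 0 0 = 0) :
    ∀ t : ℝ, |t| ≤ ε ^ (-3 : ℤ) * (2 : ℝ) ^ σ →
      ∀ j : Fin d → ℤ,
        |‖q t j‖ ^ 2 - ‖q 0 j‖ ^ 2|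
          < ε ^ 2 * (1 + (jbra j : ℝ)) ^ (-(3 * σ)) := by
  have hσ0 : 0 ≤ σ := by linarith [(Nat.cast_nonneg d : (0 : ℝ) ≤ d)]
  have hsmall := mul_lt_one_of_lt_two_zpow hd hε1
  have hinit' := norm_mul_one_add_jbra_rpow_le hε0.le hinit hzero
  have hdrift := fun t (ht : |t| ≤ ε ^ (-3 : ℤ) * 2 ^ σ) hq =>
    abs_norm_sq_sub_le hd hσ0 hRbd hderiv hode ht hq
  have hclosed : IsClosed {s | ∀ a, ‖q s a‖ * (1 + (jbra a : ℝ)) ^ σ ≤ 2 * ε} := by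
    simp only [Set.ofPred_forall]
    exact isClosed_iInter fun a => isClosed_le ((continuous_iff_continuousAt.mpr fun s =>
      (hderiv s a).continuousAt).norm.mul continuous_const) continuous_const
  have hbound := forall_abs_le_of_continuous_induction hclosed
    (fun a => (hinit' a).trans (by linarith)) fun t ht hq =>
      eventually_forall_norm_mul_le (fun a => by positivity) (hcont t)
        (fun a => norm_mul_rpow_le_of_abs_sq_sub_le (by linarith [two_le_one_add_jbra a]) hσ0
          (norm_nonneg _) (norm_nonneg _) hsmall.le (hinit' a) (hdrift t ht hq a))
        (by linarith)
  intro t ht j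
  calc _ ≤ _ := hdrift t ht (fun s hs => hbound s (hs.trans ht)) j
    _ < _ := mul_lt_of_lt_one_left (by positivity) hsmall

/-- Theorem 2 of the paper, polynomial form.
For any `d ≥ 1`, `σ ≥ d+1`, `0 < ε < 2^{-12d-9}`, arbitrary potential `v : ℤ^d → [0,1]`
and short-range degree-6 real coefficients `R^{βγ}` with `|R^{βγ}| ≤ 1`, any solution of the
coupled-oscillator equations of motion with `⫴q(0)⫴_σ ≤ ε` and `q_0(0) = 0` satisfies
`| |q_j(t)|² − |q_j(0)|² | < ε² (1+⟨j⟩)^{-3σ}` for all `|t| ≤ ε^{-3} 2^σ`. -/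
theorem stability_short_range_oscillators
    (d : ℕ) (hd : 1 ≤ d) (σ ε : ℝ) (hσ : (d : ℝ) + 1 ≤ σ)
    (hε0 : 0 < ε) (hε1 : ε < (2 : ℝ) ^ (-(12 * (d : ℤ)) - 9))
    (v : (Fin d → ℤ) → ℝ) (hv : ∀ j, v j ∈ Set.Icc (0 : ℝ) 1)
    (R : MIdx d → MIdx d → ℂ)
    (hRbd : ∀ β γ : MIdx d, wt (β + γ) = 6 → mdiam (β + γ) ≤ 1 →
      ‖R β γ‖ ≤ 1)
    (hRsym : ∀ β γ : MIdx d, wt (β + γ) = 6 → mdiam (β + γ) ≤ 1 →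
      R β γ = (starRingEnd ℂ) (R γ β))
    (q q' : ℝ → (Fin d → ℤ) → ℂ)
    (hderiv : ∀ (t : ℝ) (j : Fin d → ℤ), HasDerivAt (fun s => q s j) (q' t j) t)
    (hcont : ∀ t₀ : ℝ, ∀ δ > (0 : ℝ), ∃ r > (0 : ℝ), ∀ t : ℝ, |t - t₀| < r →
      ∀ j, ‖q t j - q t₀ j‖ * (1 + (jbra j : ℝ)) ^ σ ≤ δ)
    (hode : ∀ (t : ℝ) (j : Fin d → ℤ),
      Complex.I * q' t j =
        (v j : ℂ) * q t j + ((‖q t j‖ ^ 2 : ℝ) : ℂ) * q t j +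
          ∑' p : PairIdx d,
            R p.1.1 p.1.2 * (p.1.2 j : ℂ) *
              mono (q t) p.1.1 (p.1.2 - Finsupp.single j 1))
    (hinit : ∀ j, ‖q 0 j‖ * (1 + (norm1 j : ℝ)) ^ σ ≤ ε)
    (hzero : q 0 0 = 0) :
    ∀ t : ℝ, |t| ≤ ε ^ (-3 : ℤ) * (2 : ℝ) ^ σ →
      ∀ j : Fin d → ℤ,
        |‖q t j‖ ^ 2 - ‖q 0 j‖ ^ 2|
          < ε ^ 2 * (1 + (jbra j : ℝ)) ^ (-(3 * σ)) :=
  stability_short_range_oscillators_general d hd σ ε hσ hε0 hε1 v R hRbd q q' hderiv hcont hode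
    hinit hzero
end
end

section
/- Let d ≥ 1 be an integer, σ > 0 and δ > 0 real, c ∈ ℝ, and let k : ℤ^d → ℤ be a nonzero finitely supported function. Let P be the product probability measure on [0,1]^{ℤ^d} (the infinite product over j ∈ ℤ^d of Lebesgue measure on [0,1]). Then P({ x ∈ [0,1]^{ℤ^d} : |c + ∑_{j} k_j (1+|j|₁)^{−2σ} x_j| < δ }) ≤ 2δ · (1 + k⁻)^{2σ}, where k⁻ = min_{j∈supp k}|j|₁. -/
/-!
By uniqueness of product measures, the cylinder formula identifies the image of `P` under
restriction to the finite set `supp k` with the product of uniform measures on `[0,1]`.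
Pick `j₀ ∈ supp k` with `|j₀|₁ = k⁻` and integrate first in the coordinate `x_{j₀}`: each slice
of the set is an interval of length `2δ / (|k_{j₀}| (1 + k⁻)^{-2σ}) ≤ 2δ (1 + k⁻)^{2σ}`, and the
remaining coordinates carry a probability measure.
-/

open scoped BigOperators

noncomputable section

/-- ℤ-valued finitely supported functions on `ℤ^d` (integer vectors `k`). -/
abbrev ZIdx (d : ℕ) := (Fin d → ℤ) →₀ ℤ

/-- the ℓ¹-weight `|k| = ∑_j |k_j|` of an integer vector. -/
def wtZ {d : ℕ} (k : ZIdx d) : ℕ := k.sum fun _ n => n.natAbs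

/-- `m⁺ = max_{j ∈ supp m} |j|₁` for a multi-index `m`. -/
def mplus {d : ℕ} (m : MIdx d) : ℕ := m.support.sup norm1

/-- `k⁻ = min_{j ∈ supp k} |j|₁` for an integer vector `k` (junk value `0` if `k = 0`). -/
def kminus {d : ℕ} (k : ZIdx d) : ℕ := sInf (norm1 '' (k.support : Set (Fin d → ℤ)))

/-- the integer vector `β − γ` associated with a pair of multi-indices. -/
def subZ {d : ℕ} (β γ : MIdx d) : ZIdx d :=
  β.mapRange (fun n : ℕ => (n : ℤ)) (by simp) - γ.mapRange (fun n : ℕ => (n : ℤ)) (by simp)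

open MeasureTheory

lemma exists_mem_support_norm1_eq_kminus {d : ℕ} {k : ZIdx d} (hk : k ≠ 0) :
    ∃ j ∈ k.support, norm1 j = kminus k := by
  obtain ⟨j, hj, hjk⟩ := Nat.sInf_mem
    ((Finsupp.support_nonempty_iff.mpr hk).to_set.image (norm1 (d := d)))
  exact ⟨j, hj, hjk⟩

theorem isProjectiveLimit_pi_of_cylinder {ι α : Type*} [MeasurableSpace α]
    (ν : ι → Measure α) [∀ i, SigmaFinite (ν i)] (P : Measure (ι → α))
    (hP : ∀ (s : Finset ι) (A : ι → Set α), (∀ j, MeasurableSet (A j)) →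
      P {x | ∀ j ∈ s, x j ∈ A j} = ∏ j ∈ s, ν j (A j)) :
    IsProjectiveLimit P fun J => Measure.pi fun j : J => ν j := by
  classical
  intro s
  refine (Measure.pi_eq fun B hB => ?_).symm
  let A : ι → Set α := fun j => if h : j ∈ s then B ⟨j, h⟩ else Set.univ
  have hA : ∀ j, MeasurableSet (A j) := fun j => by
    by_cases h : j ∈ s <;> simp [A, h, hB]
  have hpre : s.restrict ⁻¹' Set.univ.pi B = {x | ∀ j ∈ s, x j ∈ A j} := by
    ext x
    exact ⟨fun h j hj => by simpa [A, hj] using h ⟨j, hj⟩ trivial,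
      fun h j _ => by simpa [A, j.2] using h j j.2⟩
  rw [Measure.map_apply (Finset.measurable_restrict s) (.univ_pi hB), hpre, hP s A hA,
    ← Finset.prod_coe_sort]
  exact Finset.prod_congr rfl fun j _ => by simp [A, j.2]

theorem volume_abs_add_mul_lt {a : ℝ} (ha : a ≠ 0) (e δ : ℝ) :
    volume {t : ℝ | |e + a * t| < δ} = ENNReal.ofReal (2 * δ / |a|) := by
  have hset : {t : ℝ | |e + a * t| < δ} = (a * ·) ⁻¹' Metric.ball (-e) δ := by
    ext t
    simp [Real.dist_eq, add_comm]
  rw [hset, Real.volume_preimage_mul_left ha, Real.volume_ball, abs_inv,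
    ← ENNReal.ofReal_mul (by positivity), inv_mul_eq_div]

theorem measure_pi_le_of_volume_slice_le {ι : Type*} [Fintype ι] [DecidableEq ι]
    (ν : ι → Measure ℝ) [∀ i, IsProbabilityMeasure (ν i)] {i₀ : ι} (hν : ν i₀ ≤ volume)
    {E : Set (ι → ℝ)} (hE : MeasurableSet E) {r : ENNReal}
    (hslice : ∀ x, volume {t | Function.update x i₀ t ∈ E} ≤ r) :
    Measure.pi ν E ≤ r := by
  have hmarg : ∫⋯∫⁻_{i₀}, E.indicator 1 ∂ν ≤ ∫⋯∫⁻_{i₀}, (fun _ => r) ∂ν := fun x => by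
    simp only [lmarginal_singleton, lintegral_const, measure_univ, mul_one]
    calc ∫⁻ t, E.indicator 1 (Function.update x i₀ t) ∂ν i₀
        ≤ ∫⁻ t, E.indicator 1 (Function.update x i₀ t) ∂volume := lintegral_mono' hν le_rfl
      _ = volume {t | Function.update x i₀ t ∈ E} :=
        lintegral_indicator_one (hE.preimage (measurable_update x))
      _ ≤ r := hslice x
  simpa [lintegral_indicator_one hE] using
    lintegral_le_of_lmarginal_le {i₀} (measurable_one.indicator hE) measurable_const hmarg

theorem measure_pi_abs_add_sum_lt_le {ι : Type*} [Fintype ι] [DecidableEq ι]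
    (ν : ι → Measure ℝ) [∀ i, IsProbabilityMeasure (ν i)] {i₀ : ι} (hν : ν i₀ ≤ volume)
    {a : ι → ℝ} (ha : a i₀ ≠ 0) (c δ : ℝ) :
    Measure.pi ν {y | |c + ∑ i, a i * y i| < δ} ≤ ENNReal.ofReal (2 * δ / |a i₀|) := by
  refine measure_pi_le_of_volume_slice_le ν hν
    (measurableSet_lt (by fun_prop) measurable_const) fun x => ?_
  have hsum : ∀ t, c + ∑ i, a i * Function.update x i₀ t i
      = (c + ∑ i ∈ Finset.univ.erase i₀, a i * x i) + a i₀ * t := fun t => by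
    rw [← Finset.add_sum_erase _ _ (Finset.mem_univ i₀), Function.update_self,
      Finset.sum_congr rfl fun i hi => by rw [Function.update_of_ne (Finset.ne_of_mem_erase hi)]]
    ring
  simp only [Set.mem_ofPred_eq, hsum]
  exact (volume_abs_add_mul_lt ha _ δ).le

theorem div_abs_intCast_mul_inv_le {m : ℤ} (hm : m ≠ 0) {B δ : ℝ} (hB : 0 < B) (hδ : 0 ≤ δ) :
    δ / |m * B⁻¹| ≤ δ * B := by
  rw [abs_mul, abs_inv, abs_of_pos hB, div_mul_eq_div_div, div_inv_eq_mul, div_mul_eq_mul_div]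
  exact div_le_self (by positivity) (by exact_mod_cast Int.one_le_abs hm)

theorem measure_single_resonance_bound_general
    (d : ℕ) (σ δ : ℝ) (hδ : 0 < δ)
    (c : ℝ) (k : ZIdx d) (hk : k ≠ 0)
    (P : Measure ((Fin d → ℤ) → ℝ))
    (hP : ∀ (s : Finset (Fin d → ℤ)) (A : (Fin d → ℤ) → Set ℝ),
      (∀ j, MeasurableSet (A j)) →
        P {x | ∀ j ∈ s, x j ∈ A j} = ∏ j ∈ s, volume (A j ∩ Set.Icc (0 : ℝ) 1)) :
    P {x | |c + k.sum fun j kj => (kj : ℝ) * (1 + (norm1 j : ℝ)) ^ (-(2 * σ)) * x j| < δ}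
      ≤ ENNReal.ofReal (2 * δ * (1 + (kminus k : ℝ)) ^ (2 * σ)) := by
  have : IsProbabilityMeasure (volume.restrict (Set.Icc (0 : ℝ) 1)) := ⟨by simp⟩
  obtain ⟨j₀, hj₀, hj₀k⟩ := exists_mem_support_norm1_eq_kminus hk
  let a : k.support → ℝ := fun j => (k j : ℝ) * (1 + (norm1 j.1 : ℝ)) ^ (-(2 * σ))
  have hproj := isProjectiveLimit_pi_of_cylinder (fun _ => volume.restrict (Set.Icc (0 : ℝ) 1)) P
    fun s A hA => by simpa only [Measure.restrict_apply (hA _)] using hP s A hA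
  have hset : {x | |c + k.sum fun j kj => (kj : ℝ) * (1 + (norm1 j : ℝ)) ^ (-(2 * σ)) * x j| < δ}
      = k.support.restrict ⁻¹' {y | |c + ∑ j, a j * y j| < δ} := by
    ext x
    simp [Finsupp.sum, a, ← Finset.sum_coe_sort k.support]
  have hB : 0 < (1 + (kminus k : ℝ)) ^ (2 * σ) := by positivity
  have ha₀ : a ⟨j₀, hj₀⟩ = k j₀ * ((1 + (kminus k : ℝ)) ^ (2 * σ))⁻¹ := by
    simp only [a, hj₀k, Real.rpow_neg (by positivity : (0 : ℝ) ≤ 1 + kminus k)]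
  have hk₀ : (k j₀ : ℝ) ≠ 0 := Int.cast_ne_zero.mpr (Finsupp.mem_support_iff.mp hj₀)
  rw [hset]
  calc P (k.support.restrict ⁻¹' _)
      ≤ P.map k.support.restrict {y | |c + ∑ j, a j * y j| < δ} :=
        Measure.le_map_apply (Finset.measurable_restrict _).aemeasurable _
    _ ≤ ENNReal.ofReal (2 * δ / |a ⟨j₀, hj₀⟩|) := by
        rw [hproj]
        refine measure_pi_abs_add_sum_lt_le (fun _ : k.support => volume.restrict (Set.Icc 0 1))
          (i₀ := ⟨j₀, hj₀⟩) (a := a) Measure.restrict_le_self ?_ c δ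
        rw [ha₀]
        exact mul_ne_zero hk₀ (inv_ne_zero hB.ne')
    _ ≤ ENNReal.ofReal (2 * δ * (1 + (kminus k : ℝ)) ^ (2 * σ)) := by
        rw [ha₀]
        exact ENNReal.ofReal_le_ofReal (div_abs_intCast_mul_inv_le
          (Finsupp.mem_support_iff.mp hj₀) hB (by positivity))

/-- single small-divisor measure bound.
Here `P` is the product probability measure on `[0,1]^{ℤ^d}`, characterized by its values on
measurable cylinder sets. For any nonzero finitely supported `k : ℤ^d → ℤ` and any `c ∈ ℝ`,
`P({x : |c + ∑_j k_j (1+|j|₁)^{-2σ} x_j| < δ}) ≤ 2δ (1 + k⁻)^{2σ}`. -/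
theorem measure_single_resonance_bound
    (d : ℕ) (hd : 1 ≤ d) (σ δ : ℝ) (hσ : 0 < σ) (hδ : 0 < δ)
    (c : ℝ) (k : ZIdx d) (hk : k ≠ 0)
    (P : Measure ((Fin d → ℤ) → ℝ))
    (hP : ∀ (s : Finset (Fin d → ℤ)) (A : (Fin d → ℤ) → Set ℝ),
      (∀ j, MeasurableSet (A j)) →
        P {x | ∀ j ∈ s, x j ∈ A j} = ∏ j ∈ s, volume (A j ∩ Set.Icc (0 : ℝ) 1)) :
    P {x | |c + k.sum fun j kj => (kj : ℝ) * (1 + (norm1 j : ℝ)) ^ (-(2 * σ)) * x j| < δ}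
      ≤ ENNReal.ofReal (2 * δ * (1 + (kminus k : ℝ)) ^ (2 * σ)) :=
  measure_single_resonance_bound_general d σ δ hδ c k hk P hP
end
end

section
/- For every integer d ≥ 1, every real σ ≥ d+1, and every integer M ≥ 6, one has the numerical estimate ∑_{s∈ℤ^d} (1+|s|₁)^{−σ} · ∑_{i=0}^{M} ∑_{j=6}^{M} (2i+2)^{dj} (2+10i)^{−2dj} < 1. (This is the convergent series appearing in the measure estimate for the set of resonant frequencies, summed over the anchor point s, the diameter i = Δ(k), and the weight j = |k| of the integer vectors k.) -/
open scoped BigOperators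

noncomputable section

/-! Each term of the finite double sum is at most `(i+1)^{-2} 2^{-dj}`, because
`2i+2 ≤ 2+10i` and `2+10i ≥ 2(i+1)`; summing the geometric series in `j ≥ 6` and
`∑ (i+1)^{-2} ≤ 2` bounds the double sum by `4 · 2^{-6d}`. For the lattice factor, `σ ≥ d+1`
reduces it to `∑_{s∈ℤ^d} (1+|s|₁)^{-(d+1)}`; forgetting signs costs `2^d`, and on `ℕ^d`
summing out one coordinate at a time with `∑_{m≥0} (a+1+m)^{-(c+2)} ≤ 2 (a+1)^{-(c+1)}`
gives another `2^d`. Altogether the series is at most `4^d · 4 · 2^{-6d} = 4 · 16^{-d} < 1`. -/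

open Finset
open scoped ENNReal

theorem sum_range_inv_add_sq_le (a n : ℕ) :
    ∑ m ∈ range n, (((a + 1 + m : ℕ) : ℝ) ^ 2)⁻¹ ≤ 2 / (a + 1) := by
  calc ∑ m ∈ range n, (((a + 1 + m : ℕ) : ℝ) ^ 2)⁻¹
      = ∑ i ∈ Ioo a (a + 1 + n), ((i : ℝ) ^ 2)⁻¹ := by
        rw [← Ico_add_one_left_eq_Ioo, sum_Ico_eq_sum_range, Nat.add_sub_cancel_left]
    _ ≤ 2 / (a + 1) := sum_Ioo_inv_sq_le a _

theorem pow_div_pow_two_mul_le {x : ℝ} (hx : 0 ≤ x) {n : ℕ} (hn : 2 ≤ n) :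
    (2 * x + 2) ^ n / (2 + 10 * x) ^ (2 * n) ≤ ((x + 1) ^ 2)⁻¹ * (1 / 2) ^ n := by
  calc (2 * x + 2) ^ n / (2 + 10 * x) ^ (2 * n)
      ≤ (2 + 10 * x) ^ n / (2 + 10 * x) ^ (2 * n) := by gcongr ?_ ^ _ / _; linarith
    _ = ((2 + 10 * x) ^ n)⁻¹ := by
        rw [two_mul, pow_add, div_mul_cancel_left₀ (by positivity)]
    _ ≤ ((2 * (x + 1)) ^ n)⁻¹ := by gcongr; linarith
    _ = ((x + 1) ^ n)⁻¹ * (1 / 2) ^ n := by rw [mul_pow, mul_inv, one_div, inv_pow, mul_comm]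
    _ ≤ ((x + 1) ^ 2)⁻¹ * (1 / 2) ^ n := by
        gcongr
        linarith

theorem sum_Icc_pow_le_two_mul_pow {r : ℝ} (hr₀ : 0 ≤ r) (hr : r ≤ 1 / 2) (m n : ℕ) :
    ∑ j ∈ Icc m n, r ^ j ≤ 2 * r ^ m := by
  rw [← Ico_add_one_right_eq_Icc]
  calc ∑ j ∈ Ico m (n + 1), r ^ j ≤ r ^ m / (1 - r) :=
        geom_sum_Ico_le_of_lt_one hr₀ (by linarith)
    _ ≤ 2 * r ^ m := by
        rw [div_le_iff₀ (by linarith)]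
        nlinarith [pow_nonneg hr₀ m]

theorem resonant_double_sum_le {d : ℕ} (hd : 1 ≤ d) (M : ℕ) :
    ∑ i ∈ range (M + 1), ∑ j ∈ Icc 6 M,
      (2 * (i : ℝ) + 2) ^ (d * j) / (2 + 10 * (i : ℝ)) ^ (2 * d * j)
        ≤ 4 * ((1 / 2) ^ d) ^ 6 := by
  have hr : ((1 : ℝ) / 2) ^ d ≤ 1 / 2 := pow_le_of_le_one (by norm_num) (by norm_num) (by omega)
  calc ∑ i ∈ range (M + 1), ∑ j ∈ Icc 6 M,
        (2 * (i : ℝ) + 2) ^ (d * j) / (2 + 10 * (i : ℝ)) ^ (2 * d * j)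
      ≤ ∑ i ∈ range (M + 1), ∑ j ∈ Icc 6 M, (((i : ℝ) + 1) ^ 2)⁻¹ * ((1 / 2) ^ d) ^ j := by
        gcongr with i _ j hj
        rw [mul_assoc, ← pow_mul]
        exact pow_div_pow_two_mul_le i.cast_nonneg (by nlinarith [(mem_Icc.mp hj).1])
    _ = (∑ i ∈ range (M + 1), (((i : ℝ) + 1) ^ 2)⁻¹) * ∑ j ∈ Icc 6 M, ((1 / 2) ^ d) ^ j :=
        (sum_mul_sum _ _ _ _).symm
    _ ≤ 2 * (2 * ((1 / 2) ^ d) ^ 6) := by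
        gcongr
        · simpa [add_comm] using sum_range_inv_add_sq_le 0 (M + 1)
        · exact sum_Icc_pow_le_two_mul_pow (by positivity) hr 6 M
    _ = 4 * ((1 / 2) ^ d) ^ 6 := by ring

theorem ENNReal.ofReal_inv_natCast_pow {n : ℕ} (hn : n ≠ 0) (k : ℕ) :
    ENNReal.ofReal ((n : ℝ) ^ k)⁻¹ = (n : ℝ≥0∞)⁻¹ ^ k := by
  rw [ENNReal.ofReal_inv_of_pos (by positivity), ENNReal.ofReal_pow n.cast_nonneg,
    ENNReal.ofReal_natCast, ENNReal.inv_pow]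

theorem tsum_inv_add_sq_le (a : ℕ) :
    ∑' m : ℕ, ((a + 1 + m : ℕ) : ℝ≥0∞)⁻¹ ^ 2 ≤ 2 * ((a + 1 : ℕ) : ℝ≥0∞)⁻¹ := by
  refine ENNReal.tsum_le_of_sum_range_le fun n => ?_
  calc ∑ m ∈ range n, ((a + 1 + m : ℕ) : ℝ≥0∞)⁻¹ ^ 2
      = ENNReal.ofReal (∑ m ∈ range n, (((a + 1 + m : ℕ) : ℝ) ^ 2)⁻¹) := by
        rw [ENNReal.ofReal_sum_of_nonneg fun m _ => by positivity]
        exact sum_congr rfl fun m _ => (ENNReal.ofReal_inv_natCast_pow (by omega) 2).symm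
    _ ≤ ENNReal.ofReal (2 * (((a + 1 : ℕ) : ℝ) ^ 1)⁻¹) := by
        gcongr
        simpa [div_eq_mul_inv] using sum_range_inv_add_sq_le a n
    _ = 2 * ((a + 1 : ℕ) : ℝ≥0∞)⁻¹ := by
        rw [ENNReal.ofReal_mul zero_le_two, ENNReal.ofReal_inv_natCast_pow (by omega), pow_one,
          ENNReal.ofReal_ofNat]

theorem tsum_inv_add_pow_le (a c : ℕ) :
    ∑' m : ℕ, ((a + 1 + m : ℕ) : ℝ≥0∞)⁻¹ ^ (c + 2) ≤ 2 * ((a + 1 : ℕ) : ℝ≥0∞)⁻¹ ^ (c + 1) := by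
  have hterm (m : ℕ) : ((a + 1 + m : ℕ) : ℝ≥0∞)⁻¹ ^ (c + 2)
      ≤ ((a + 1 : ℕ) : ℝ≥0∞)⁻¹ ^ c * ((a + 1 + m : ℕ) : ℝ≥0∞)⁻¹ ^ 2 := by
    rw [pow_add]
    gcongr (?_ : ℝ≥0∞)⁻¹ ^ c * _
    exact_mod_cast (by omega : a + 1 ≤ a + 1 + m)
  calc ∑' m : ℕ, ((a + 1 + m : ℕ) : ℝ≥0∞)⁻¹ ^ (c + 2)
      ≤ ((a + 1 : ℕ) : ℝ≥0∞)⁻¹ ^ c * ∑' m : ℕ, ((a + 1 + m : ℕ) : ℝ≥0∞)⁻¹ ^ 2 := by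
        rw [← ENNReal.tsum_mul_left]
        exact ENNReal.tsum_le_tsum hterm
    _ ≤ ((a + 1 : ℕ) : ℝ≥0∞)⁻¹ ^ c * (2 * ((a + 1 : ℕ) : ℝ≥0∞)⁻¹) := by
        gcongr
        exact tsum_inv_add_sq_le a
    _ = 2 * ((a + 1 : ℕ) : ℝ≥0∞)⁻¹ ^ (c + 1) := by ring

theorem tsum_inv_add_sum_pow_le (d c a : ℕ) :
    ∑' t : Fin d → ℕ, ((a + 1 + ∑ i, t i : ℕ) : ℝ≥0∞)⁻¹ ^ (d + c + 1)
      ≤ 2 ^ d * ((a + 1 : ℕ) : ℝ≥0∞)⁻¹ ^ (c + 1) := by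
  induction d generalizing c a with
  | zero => simp
  | succ d ih =>
    rw [← (Fin.consEquiv fun _ => ℕ).tsum_eq, ENNReal.tsum_prod']
    calc ∑' (m : ℕ) (t : Fin d → ℕ),
          ((a + 1 + ∑ i, Fin.consEquiv (fun _ => ℕ) (m, t) i : ℕ) : ℝ≥0∞)⁻¹ ^ (d + 1 + c + 1)
        = ∑' (m : ℕ) (t : Fin d → ℕ),
            ((a + m + 1 + ∑ i, t i : ℕ) : ℝ≥0∞)⁻¹ ^ (d + (c + 1) + 1) := by
          refine tsum_congr fun m => tsum_congr fun t => ?_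
          simp only [Fin.consEquiv_apply, Fin.sum_cons]
          rw [show a + 1 + (m + ∑ i, t i) = a + m + 1 + ∑ i, t i by omega,
            show d + 1 + c + 1 = d + (c + 1) + 1 by omega]
      _ ≤ ∑' m : ℕ, 2 ^ d * ((a + 1 + m : ℕ) : ℝ≥0∞)⁻¹ ^ (c + 2) := by
          refine ENNReal.tsum_le_tsum fun m => (ih (c + 1) (a + m)).trans_eq ?_
          congr 4
          omega
      _ ≤ 2 ^ d * (2 * ((a + 1 : ℕ) : ℝ≥0∞)⁻¹ ^ (c + 1)) := by
          rw [ENNReal.tsum_mul_left]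
          gcongr
          exact tsum_inv_add_pow_le a c
      _ = 2 ^ (d + 1) * ((a + 1 : ℕ) : ℝ≥0∞)⁻¹ ^ (c + 1) := by ring

theorem tsum_norm1_le_two_pow_mul (d : ℕ) (f : ℕ → ℝ≥0∞) :
    ∑' s : Fin d → ℤ, f (norm1 s) ≤ 2 ^ d * ∑' t : Fin d → ℕ, f (∑ i, t i) := by
  have hinj : Function.Injective fun s : Fin d → ℤ =>
      ((fun i => decide (s i < 0), fun i => (s i).natAbs) : (Fin d → Bool) × (Fin d → ℕ)) := by
    intro s s' h
    funext i
    have hsign := congrFun (congrArg Prod.fst h) i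
    have habs := congrFun (congrArg Prod.snd h) i
    simp only [decide_eq_decide] at hsign habs
    omega
  calc ∑' s : Fin d → ℤ, f (norm1 s)
      ≤ ∑' p : (Fin d → Bool) × (Fin d → ℕ), f (∑ i, p.2 i) :=
        ENNReal.tsum_comp_le_tsum_of_injective hinj fun p => f (∑ i, p.2 i)
    _ = 2 ^ d * ∑' t : Fin d → ℕ, f (∑ i, t i) := by
        rw [ENNReal.tsum_prod']
        simp

theorem tsum_one_add_norm1_rpow_neg_le {d : ℕ} {σ : ℝ} (hσ : (d : ℝ) + 1 ≤ σ) :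
    ∑' s : Fin d → ℤ, ENNReal.ofReal ((1 + (norm1 s : ℝ)) ^ (-σ)) ≤ 4 ^ d := by
  have hpoint (n : ℕ) :
      ENNReal.ofReal ((1 + (n : ℝ)) ^ (-σ)) ≤ ((1 + n : ℕ) : ℝ≥0∞)⁻¹ ^ (d + 1) := by
    rw [← ENNReal.ofReal_inv_natCast_pow (by omega)]
    gcongr
    rw [← Real.rpow_natCast, ← Real.rpow_neg (by positivity)]
    push_cast
    exact Real.rpow_le_rpow_of_exponent_le (by linarith [n.cast_nonneg (α := ℝ)]) (by linarith)
  have hnat := tsum_inv_add_sum_pow_le d 0 0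
  simp only [zero_add, add_zero, Nat.cast_one, inv_one, one_pow, mul_one] at hnat
  calc ∑' s : Fin d → ℤ, ENNReal.ofReal ((1 + (norm1 s : ℝ)) ^ (-σ))
      ≤ ∑' s : Fin d → ℤ, ((1 + norm1 s : ℕ) : ℝ≥0∞)⁻¹ ^ (d + 1) :=
        ENNReal.tsum_le_tsum fun s => hpoint (norm1 s)
    _ ≤ 2 ^ d * 2 ^ d :=
        (tsum_norm1_le_two_pow_mul d fun n => ((1 + n : ℕ) : ℝ≥0∞)⁻¹ ^ (d + 1)).trans
          (by gcongr)
    _ = 4 ^ d := by rw [← mul_pow]; norm_num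

theorem resonant_series_lt_one_general
    (d : ℕ) (hd : 1 ≤ d) (σ : ℝ) (hσ : (d : ℝ) + 1 ≤ σ) (M : ℕ) :
    ∑' s : Fin d → ℤ,
        ENNReal.ofReal ((1 + (norm1 s : ℝ)) ^ (-σ) *
          ∑ i ∈ Finset.range (M + 1), ∑ j ∈ Finset.Icc 6 M,
            (2 * (i : ℝ) + 2) ^ (d * j) / (2 + 10 * (i : ℝ)) ^ (2 * d * j))
      < 1 := by
  set B : ℝ := ∑ i ∈ range (M + 1), ∑ j ∈ Icc 6 M,
    (2 * (i : ℝ) + 2) ^ (d * j) / (2 + 10 * (i : ℝ)) ^ (2 * d * j)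
  have hB₀ : 0 ≤ B := sum_nonneg fun i _ => sum_nonneg fun j _ => by positivity
  have h16 : (4 : ℝ) ^ d * (4 * ((1 / 2) ^ d) ^ 6) = 4 * (1 / 16) ^ d := by
    rw [← pow_mul, mul_comm d, pow_mul, mul_left_comm, ← mul_pow]
    norm_num
  calc ∑' s : Fin d → ℤ, ENNReal.ofReal ((1 + (norm1 s : ℝ)) ^ (-σ) * B)
      = (∑' s : Fin d → ℤ, ENNReal.ofReal ((1 + (norm1 s : ℝ)) ^ (-σ))) * ENNReal.ofReal B := by
        rw [← ENNReal.tsum_mul_right]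
        exact tsum_congr fun s => ENNReal.ofReal_mul (by positivity)
    _ ≤ ENNReal.ofReal 4 ^ d * ENNReal.ofReal (4 * ((1 / 2) ^ d) ^ 6) := by
        rw [ENNReal.ofReal_ofNat]
        gcongr
        exacts [tsum_one_add_norm1_rpow_neg_le hσ, resonant_double_sum_le hd M]
    _ = ENNReal.ofReal (4 * (1 / 16) ^ d) := by
        rw [← ENNReal.ofReal_pow zero_le_four, ← ENNReal.ofReal_mul (by positivity), h16]
    _ < 1 := by
        rw [ENNReal.ofReal_lt_one]
        have hpow : ((1 : ℝ) / 16) ^ d ≤ 1 / 16 := pow_le_of_le_one (by norm_num) (by norm_num) (by omega)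
        linarith

/-- the convergent series in the measure estimate of Lemma 4.1:
for `d ≥ 1`, `σ ≥ d+1` and `M ≥ 6`,
`∑_{s∈ℤ^d} (1+|s|₁)^{-σ} ∑_{i=0}^{M} ∑_{j=6}^{M} (2i+2)^{dj} (2+10i)^{-2dj} < 1`. -/
theorem resonant_series_lt_one
    (d : ℕ) (hd : 1 ≤ d) (σ : ℝ) (hσ : (d : ℝ) + 1 ≤ σ) (M : ℕ) (hM : 6 ≤ M) :
    ∑' s : Fin d → ℤ,
        ENNReal.ofReal ((1 + (norm1 s : ℝ)) ^ (-σ) *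
          ∑ i ∈ Finset.range (M + 1), ∑ j ∈ Finset.Icc 6 M,
            (2 * (i : ℝ) + 2) ^ (d * j) / (2 + 10 * (i : ℝ)) ^ (2 * d * j))
      < 1 :=
  resonant_series_lt_one_general d hd σ hσ M
end
end
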